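/- Let H ~ Hyp(n,i,k) and X ~ Bin(k, i/n). Let H* denote H conditioned on the event {H ≥ i·k/n} and X* denote X conditioned on the event {X ≥ i·k/n}. Then H* is smaller than X* in the usual stochastic order, i.e. for every real t, P(H ≥ t | H ≥ i·k/n) ≤ P(X ≥ t | X ≥ i·k/n). -/

import Mathlib

/-- The probability mass function of the hypergeometric distribution `Hyp(n,i,k)`. -/
noncomputable def hypPMF (n i k j : ℕ) : ℝ :=
  ((Nat.choose i j : ℝ) * (Nat.choose (n - i) (k - j) : ℝ)) / (Nat.choose n k : ℝ)

/-- The probability mass function of the binomial distribution `Bin(k,p)`. -/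
noncomputable def binPMF (k : ℕ) (p : ℝ) (j : ℕ) : ℝ :=
  (Nat.choose k j : ℝ) * p ^ j * (1 - p) ^ (k - j)

/-- `P(H ≥ t)` for `H ~ Hyp(n,i,k)`. -/
noncomputable def hypTail (n i k : ℕ) (t : ℝ) : ℝ :=
  ∑ j ∈ Finset.range (k + 1), if t ≤ (j : ℝ) then hypPMF n i k j else 0

/-- `P(X ≥ t)` for `X ~ Bin(k,p)`. -/
noncomputable def binTail (k : ℕ) (p : ℝ) (t : ℝ) : ℝ :=
  ∑ j ∈ Finset.range (k + 1), if t ≤ (j : ℝ) then binPMF k p j else 0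

/-! For `j ≥ i·k/n` the likelihood ratio `P(H = j) / P(X = j)` is nonincreasing in `j`: the
ratio of consecutive ratios is `(i - j)(n - i) / (i (n - i - k + j + 1))`, which is at most `1`
as soon as `i·k ≤ j·n`. A likelihood ratio that is nonincreasing on `[L, k]` forces the
comparison of the tails conditioned on `[L, k]`: every term of the mass of `H` on `[u, k]` times
that of `X` on `[L, u)` is dominated by the corresponding term with the roles swapped. -/

open Finset

theorem sum_range_ite_le_eq_sum_Ico_ceil {α M : Type*} [Semiring α] [LinearOrder α]
    [IsStrictOrderedRing α] [FloorSemiring α] [AddCommMonoid M] (f : ℕ → M) (k : ℕ) (t : α) :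
    (∑ j ∈ range (k + 1), if t ≤ (j : α) then f j else 0) = ∑ j ∈ Ico ⌈t⌉₊ (k + 1), f j := by
  rw [← sum_filter]
  congr 1
  ext j
  simp only [mem_filter, mem_range, mem_Ico, Nat.ceil_le, and_comm]

section TailRatio

variable {K : Type*} [Field K] [LinearOrder K] [IsStrictOrderedRing K] {a b : ℕ → K} {L u k : ℕ}

theorem sum_Ico_mul_sum_Ico_le_of_antitoneOn_div (hLu : L ≤ u)
    (hb : ∀ j ∈ Set.Icc L k, 0 < b j) (hab : AntitoneOn (fun j ↦ a j / b j) (Set.Icc L k)) :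
    (∑ j ∈ Ico u (k + 1), a j) * ∑ j ∈ Ico L (k + 1), b j
      ≤ (∑ j ∈ Ico L (k + 1), a j) * ∑ j ∈ Ico u (k + 1), b j := by
  rcases lt_or_ge (k + 1) u with hku | huk
  · simp [Ico_eq_empty_of_le hku.le]
  have hcross : (∑ j' ∈ Ico u (k + 1), a j') * ∑ j ∈ Ico L u, b j
      ≤ (∑ j ∈ Ico L u, a j) * ∑ j' ∈ Ico u (k + 1), b j' := by
    rw [sum_mul_sum, sum_mul_sum, sum_comm]
    refine sum_le_sum fun j hj ↦ sum_le_sum fun j' hj' ↦ ?_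
    rw [mem_Ico] at hj hj'
    have hjI : j ∈ Set.Icc L k := ⟨hj.1, by omega⟩
    have hj'I : j' ∈ Set.Icc L k := ⟨by omega, by omega⟩
    have := hab hjI hj'I (by omega)
    rwa [div_le_div_iff₀ (hb j' hj'I) (hb j hjI)] at this
  rw [← sum_Ico_consecutive a hLu huk, ← sum_Ico_consecutive b hLu huk]
  linarith

theorem sum_Ico_div_sum_Ico_le_of_antitoneOn_div (hLu : L ≤ u) (ha : ∀ j ∈ Set.Icc L k, 0 ≤ a j)
    (hb : ∀ j ∈ Set.Icc L k, 0 < b j) (hab : AntitoneOn (fun j ↦ a j / b j) (Set.Icc L k)) :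
    (∑ j ∈ Ico u (k + 1), a j) / (∑ j ∈ Ico L (k + 1), a j)
      ≤ (∑ j ∈ Ico u (k + 1), b j) / ∑ j ∈ Ico L (k + 1), b j := by
  have hIco : ∀ {v j}, L ≤ v → j ∈ Ico v (k + 1) → j ∈ Set.Icc L k := fun hv hj ↦ by
    rw [mem_Ico] at hj; exact ⟨by omega, by omega⟩
  have hAL : 0 ≤ ∑ j ∈ Ico L (k + 1), a j := sum_nonneg fun j hj ↦ ha j (hIco le_rfl hj)
  have hBu : 0 ≤ ∑ j ∈ Ico u (k + 1), b j := sum_nonneg fun j hj ↦ (hb j (hIco hLu hj)).le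
  rcases hAL.eq_or_lt with hAL0 | hALpos
  · rw [← hAL0, div_zero]
    exact div_nonneg hBu (sum_nonneg fun j hj ↦ (hb j (hIco le_rfl hj)).le)
  have hBL : 0 < ∑ j ∈ Ico L (k + 1), b j := by
    obtain ⟨j, hj, -⟩ := exists_ne_zero_of_sum_ne_zero hALpos.ne'
    exact sum_pos (fun j hj ↦ hb j (hIco le_rfl hj)) ⟨j, hj⟩
  rw [div_le_div_iff₀ hALpos hBL]
  linarith [sum_Ico_mul_sum_Ico_le_of_antitoneOn_div hLu hb hab]

end TailRatio

-- `P(H = j+1) P(X = j) ≤ P(H = j) P(X = j+1)` with the common factors cancelled.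
theorem Nat.choose_succ_mul_choose_mul_le_of_mul_le {n i k j : ℕ} (hi : i ≤ n) (hjk : j < k)
    (h : i * k ≤ j * n) :
    i.choose (j + 1) * (n - i).choose (k - (j + 1)) * k.choose j * (n - i)
      ≤ i.choose j * (n - i).choose (k - j) * k.choose (j + 1) * i := by
  rcases lt_or_ge i (j + 1) with hij | hij
  · simp [Nat.choose_eq_zero_of_lt hij]
  rcases lt_or_ge (n - i) (k - (j + 1)) with hr | hr
  · simp [Nat.choose_eq_zero_of_lt hr]
  obtain ⟨d, rfl⟩ : ∃ d, i = j + 1 + d := ⟨i - (j + 1), by omega⟩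
  obtain ⟨r, rfl⟩ : ∃ r, k = j + 1 + r := ⟨k - (j + 1), by omega⟩
  obtain ⟨e, rfl⟩ : ∃ e, n = j + 1 + d + r + e := ⟨n - (j + 1 + d + r), by omega⟩
  rw [show j + 1 + d + r + e - (j + 1 + d) = r + e by omega, show j + 1 + r - (j + 1) = r by omega,
    show j + 1 + r - j = r + 1 by omega]
  have e1 : (j + 1 + d).choose (j + 1) * (j + 1) = (j + 1 + d).choose j * (d + 1) := by
    rw [Nat.choose_succ_right_eq]; congr 2; omega
  have e2 : (j + 1 + r).choose (j + 1) * (j + 1) = (j + 1 + r).choose j * (r + 1) := by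
    rw [Nat.choose_succ_right_eq]; congr 2; omega
  have e3 : (r + e).choose (r + 1) * (r + 1) = (r + e).choose r * e := by
    rw [Nat.choose_succ_right_eq]; congr 2; omega
  have core : (d + 1) * (r + e) ≤ e * (j + 1 + d) := by nlinarith
  set X := (j + 1 + d).choose j * (r + e).choose r * (j + 1 + r).choose j * (r + 1)
  refine Nat.le_of_mul_le_mul_right ?_ (Nat.mul_pos j.succ_pos r.succ_pos)
  calc (j + 1 + d).choose (j + 1) * (r + e).choose r * (j + 1 + r).choose j * (r + e)
        * ((j + 1) * (r + 1))
      = X * ((d + 1) * (r + e)) := by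
        linear_combination ((r + e).choose r * (j + 1 + r).choose j * (r + e) * (r + 1)) * e1
    _ ≤ X * (e * (j + 1 + d)) := Nat.mul_le_mul_left X core
    _ = (j + 1 + d).choose j * ((r + e).choose r * e) * ((j + 1 + r).choose j * (r + 1))
          * (j + 1 + d) := by ring
    _ = (j + 1 + d).choose j * (r + e).choose (r + 1) * (j + 1 + r).choose (j + 1) * (j + 1 + d)
          * ((j + 1) * (r + 1)) := by
      rw [← e3, ← e2]; ring

theorem hypPMF_nonneg (n i k j : ℕ) : 0 ≤ hypPMF n i k j := by
  unfold hypPMF; positivity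

theorem binPMF_pos {k j : ℕ} {p : ℝ} (hp₀ : 0 < p) (hp₁ : p < 1) (hj : j ≤ k) :
    0 < binPMF k p j := by
  have := sub_pos.2 hp₁
  have := Nat.choose_pos hj
  unfold binPMF
  positivity

theorem binPMF_div_pos_of_mul_le {n i k j : ℕ} (hi₁ : 1 ≤ i) (hi : i ≤ n) (hj : j ≤ k)
    (h : i * k ≤ j * n) : 0 < binPMF k (i / n) j := by
  have hn : (0 : ℝ) < n := Nat.cast_pos.2 (by omega)
  rcases hi.lt_or_eq with hin | rfl
  · refine binPMF_pos (by positivity) ?_ hj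
    rw [div_lt_one hn]; exact_mod_cast hin
  · obtain rfl : j = k :=
      le_antisymm hj (Nat.le_of_mul_le_mul_left (by linarith : i * k ≤ i * j) hi₁)
    simp [binPMF, div_self hn.ne']

theorem hypPMF_succ_mul_binPMF_le {n i k j : ℕ} (hn : 0 < n) (hi : i ≤ n) (hjk : j < k)
    (h : i * k ≤ j * n) :
    hypPMF n i k (j + 1) * binPMF k (i / n) j ≤ hypPMF n i k j * binPMF k (i / n) (j + 1) := by
  set r := k - (j + 1)
  set p : ℝ := i / n
  set q : ℝ := ((n - i : ℕ) : ℝ) / n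
  have hq : 1 - p = q := by
    have : (n : ℝ) ≠ 0 := by positivity
    simp only [p, q, Nat.cast_sub hi, sub_div, div_self this]
  have hkj : k - j = r + 1 := by omega
  have key : (i.choose (j + 1) * (n - i).choose r * k.choose j * (n - i : ℕ) : ℝ)
      ≤ i.choose j * (n - i).choose (r + 1) * k.choose (j + 1) * i := by
    rw [← hkj]; exact_mod_cast Nat.choose_succ_mul_choose_mul_le_of_mul_le hi hjk h
  unfold hypPMF binPMF
  rw [hq, hkj]
  calc _ = p ^ j * q ^ r / (n.choose k * n)
        * (i.choose (j + 1) * (n - i).choose r * k.choose j * (n - i : ℕ)) := by ring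
    _ ≤ p ^ j * q ^ r / (n.choose k * n)
        * (i.choose j * (n - i).choose (r + 1) * k.choose (j + 1) * i) :=
      mul_le_mul_of_nonneg_left key (by positivity)
    _ = _ := by ring

theorem antitoneOn_hypPMF_div_binPMF {n i k L : ℕ} (hi₁ : 1 ≤ i) (hi : i ≤ n)
    (hL : i * k ≤ L * n) :
    AntitoneOn (fun j ↦ hypPMF n i k j / binPMF k (i / n) j) (Set.Icc L k) := by
  have hmul : ∀ {j}, L ≤ j → i * k ≤ j * n := fun hj ↦ hL.trans (Nat.mul_le_mul_right n hj)
  refine antitoneOn_of_succ_le Set.ordConnected_Icc fun j _ hj hj₁ ↦ ?_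
  rw [Order.succ_eq_add_one] at hj₁ ⊢
  rw [div_le_div_iff₀ (binPMF_div_pos_of_mul_le hi₁ hi hj₁.2 (hmul hj₁.1))
    (binPMF_div_pos_of_mul_le hi₁ hi hj.2 (hmul hj.1))]
  exact hypPMF_succ_mul_binPMF_le (by omega) hi hj₁.2 (hmul hj.1)

theorem hyp_cond_st_bin_cond_general (n i k : ℕ)
    (hi1 : 1 ≤ i) (hi2 : i ≤ n) (t : ℝ) :
    hypTail n i k (max t ((i : ℝ) * k / n)) / hypTail n i k ((i : ℝ) * k / n)
      ≤ binTail k ((i : ℝ) / n) (max t ((i : ℝ) * k / n)) /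
          binTail k ((i : ℝ) / n) ((i : ℝ) * k / n) := by
  have hL : i * k ≤ ⌈(i : ℝ) * k / n⌉₊ * n := by
    have hceil := Nat.le_ceil ((i : ℝ) * k / n)
    rw [div_le_iff₀ (Nat.cast_pos.2 (by omega))] at hceil
    exact_mod_cast hceil
  unfold hypTail binTail
  simp only [sum_range_ite_le_eq_sum_Ico_ceil]
  exact sum_Ico_div_sum_Ico_le_of_antitoneOn_div (Nat.ceil_mono (le_max_right _ _))
    (fun j _ ↦ hypPMF_nonneg n i k j)
    (fun j hj ↦ binPMF_div_pos_of_mul_le hi1 hi2 hj.2 (hL.trans (Nat.mul_le_mul_right n hj.1)))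
    (antitoneOn_hypPMF_div_binPMF hi1 hi2 hL)

/-- Let `H ~ Hyp(n,i,k)` and `X ~ Bin(k, i/n)`.  Then `H` conditioned on
`{H ≥ i·k/n}` is smaller, in the usual stochastic order, than `X` conditioned on
`{X ≥ i·k/n}`: for every real `t`,
`P(H ≥ t | H ≥ i·k/n) ≤ P(X ≥ t | X ≥ i·k/n)`.
Here `P(H ≥ t | H ≥ m) = P(H ≥ max t m)/P(H ≥ m)`. -/
theorem hyp_cond_st_bin_cond (n i k : ℕ) (hn : 0 < n)
    (hi1 : 1 ≤ i) (hi2 : i ≤ n) (hk1 : 1 ≤ k) (hk2 : k ≤ n) (t : ℝ) :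
    hypTail n i k (max t ((i : ℝ) * k / n)) / hypTail n i k ((i : ℝ) * k / n)
      ≤ binTail k ((i : ℝ) / n) (max t ((i : ℝ) * k / n)) /
          binTail k ((i : ℝ) / n) ((i : ℝ) * k / n) :=
  hyp_cond_st_bin_cond_general n i k hi1 hi2 t
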